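/- arXiv:1805.01812 — 2 statements merged into one kernel-verified Lean document; each statement's English description precedes it below -/
import Mathlib

section
/- Let d ≥ 1, let Ω̂ ⊆ ℝ^d be a measurable set, let N ≥ 1 be an integer, and let Δt > 0, α > 0 be real numbers. For each n = 0, …, N let J^n : Ω̂ → ℝ and û^n : Ω̂ → ℝ be measurable with J^n·û^n integrable and û^n differentiable, and for each n = 1, …, N let q̂^{n-1} : Ω̂ → ℝ^d and M^n : Ω̂ → ℝ^{d×d} be measurable fields. Let V be a set of differentiable functions v̂ : ℝ^d → ℝ containing the constant function 1, and suppose that for every n = 1, …, N and every v̂ ∈ V: ∫_{Ω̂} J^n û^n v̂ dx̂ + Δt ∫_{Ω̂} J^n û^n (q̂^{n-1} · M^n ∇v̂) dx̂ + α Δt ∫_{Ω̂} J^n (M^n ∇û^n) · (M^n ∇v̂) dx̂ = ∫_{Ω̂} J^{n-1} û^{n-1} v̂ dx̂ (with all integrands integrable). Then for every n = 0, …, N: ∫_{Ω̂} J^n û^n dx̂ = ∫_{Ω̂} J^0 û^0 dx̂. -/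
open MeasureTheory RealInnerProductSpace

/- Testing the scheme with the constant function `v̂ = 1` kills the advection and diffusion terms,
since `∇1 = 0`, so every time step preserves the mass `∫ J^n û^n`. -/

theorem Nat.apply_eq_apply_zero_of_eq_apply_pred {α : Type*} {m : ℕ → α} {N : ℕ}
    (h : ∀ n, 1 ≤ n → n ≤ N → m n = m (n - 1)) : ∀ n ≤ N, m n = m 0 := by
  intro n hn
  induction n with
  | zero => rfl
  | succ k ih => rw [h (k + 1) k.succ_pos hn, Nat.add_sub_cancel, ih (by omega)]

theorem mass_conservation_all_steps_general
    (d : ℕ)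
    (Ω : Set (EuclideanSpace ℝ (Fin d)))
    (N : ℕ)
    (Δt α : ℝ)
    (J u : ℕ → EuclideanSpace ℝ (Fin d) → ℝ)
    (q : ℕ → EuclideanSpace ℝ (Fin d) → EuclideanSpace ℝ (Fin d))
    (M : ℕ → EuclideanSpace ℝ (Fin d) →
      (EuclideanSpace ℝ (Fin d) →L[ℝ] EuclideanSpace ℝ (Fin d)))
    (V : Set (EuclideanSpace ℝ (Fin d) → ℝ))
    (hV1 : (fun _ => (1 : ℝ)) ∈ V)
    (hupdate : ∀ n, 1 ≤ n → n ≤ N → ∀ v ∈ V,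
      (∫ x in Ω, J n x * u n x * v x)
        + Δt * ∫ x in Ω, J n x * u n x * ⟪q (n - 1) x, M n x (gradient v x)⟫
        + α * Δt * ∫ x in Ω, J n x * ⟪M n x (gradient (u n) x), M n x (gradient v x)⟫
      = ∫ x in Ω, J (n - 1) x * u (n - 1) x * v x) :
    ∀ n ≤ N, ∫ x in Ω, J n x * u n x = ∫ x in Ω, J 0 x * u 0 x := by
  refine Nat.apply_eq_apply_zero_of_eq_apply_pred (m := fun n => ∫ x in Ω, J n x * u n x)
    fun n hn hnN => ?_
  simpa only [gradient_fun_const, map_zero, inner_zero_right, mul_zero, mul_one,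
    integral_zero, add_zero] using hupdate n hn hnN _ hV1

/-- Global-in-time mass conservation of the fully discrete ALE finite element scheme:
the total solute mass at every time step equals the initial total mass. -/
theorem mass_conservation_all_steps
    (d : ℕ) (hd : 1 ≤ d)
    (Ω : Set (EuclideanSpace ℝ (Fin d))) (hΩ : MeasurableSet Ω)
    (N : ℕ) (hN : 1 ≤ N)
    (Δt α : ℝ) (hΔt : 0 < Δt) (hα : 0 < α)
    (J u : ℕ → EuclideanSpace ℝ (Fin d) → ℝ)
    (hJ : ∀ n ≤ N, Measurable (J n)) (hu : ∀ n ≤ N, Measurable (u n))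
    (huint : ∀ n ≤ N, IntegrableOn (fun x => J n x * u n x) Ω)
    (huDiff : ∀ n ≤ N, Differentiable ℝ (u n))
    (q : ℕ → EuclideanSpace ℝ (Fin d) → EuclideanSpace ℝ (Fin d))
    (hq : ∀ n, 1 ≤ n → n ≤ N → Measurable (q (n - 1)))
    (M : ℕ → EuclideanSpace ℝ (Fin d) →
      (EuclideanSpace ℝ (Fin d) →L[ℝ] EuclideanSpace ℝ (Fin d)))
    (hM : ∀ n, 1 ≤ n → n ≤ N → Measurable (M n))
    (V : Set (EuclideanSpace ℝ (Fin d) → ℝ))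
    (hVdiff : ∀ v ∈ V, Differentiable ℝ v)
    (hV1 : (fun _ => (1 : ℝ)) ∈ V)
    (hint1 : ∀ n, 1 ≤ n → n ≤ N → ∀ v ∈ V,
      IntegrableOn (fun x => J n x * u n x * v x) Ω)
    (hint2 : ∀ n, 1 ≤ n → n ≤ N → ∀ v ∈ V,
      IntegrableOn (fun x => J n x * u n x * ⟪q (n - 1) x, M n x (gradient v x)⟫) Ω)
    (hint3 : ∀ n, 1 ≤ n → n ≤ N → ∀ v ∈ V,
      IntegrableOn (fun x => J n x * ⟪M n x (gradient (u n) x), M n x (gradient v x)⟫) Ω)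
    (hint4 : ∀ n, 1 ≤ n → n ≤ N → ∀ v ∈ V,
      IntegrableOn (fun x => J (n - 1) x * u (n - 1) x * v x) Ω)
    (hupdate : ∀ n, 1 ≤ n → n ≤ N → ∀ v ∈ V,
      (∫ x in Ω, J n x * u n x * v x)
        + Δt * ∫ x in Ω, J n x * u n x * ⟪q (n - 1) x, M n x (gradient v x)⟫
        + α * Δt * ∫ x in Ω, J n x * ⟪M n x (gradient (u n) x), M n x (gradient v x)⟫
      = ∫ x in Ω, J (n - 1) x * u (n - 1) x * v x) :
    ∀ n ≤ N, ∫ x in Ω, J n x * u n x = ∫ x in Ω, J 0 x * u 0 x :=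
  mass_conservation_all_steps_general d Ω N Δt α J u q M V hV1 hupdate
end

section
/- Let d ≥ 1, let Ω̂ ⊆ ℝ^d be a measurable set, and let Δt > 0, α > 0 be real numbers. Let Ψ^{n-1}, Ψ^n : ℝ^d → ℝ^d be injective on Ω̂ and differentiable, with det DΨ^{n-1}(x̂) > 0 and det DΨ^n(x̂) > 0 for all x̂ ∈ Ω̂. Let U_r be a set of differentiable functions v̂ : ℝ^d → ℝ containing the constant function 1, let û^{n-1}, û^n ∈ U_r, let q̂ : Ω̂ → ℝ^d be measurable, and suppose that for every v̂ ∈ U_r the Galerkin-reduced update equation holds: ∫_{Ω̂} det(DΨ^n) û^n v̂ dx̂ + Δt ∫_{Ω̂} det(DΨ^n) û^n (q̂ · (DΨ^n)^{-T} ∇v̂) dx̂ + α Δt ∫_{Ω̂} det(DΨ^n) ((DΨ^n)^{-T} ∇û^n) · ((DΨ^n)^{-T} ∇v̂) dx̂ = ∫_{Ω̂} det(DΨ^{n-1}) û^{n-1} v̂ dx̂ (with all integrands integrable). Then the total physical masses on the deformed domains agree: ∫_{Ψ^n(Ω̂)} u^n dx = ∫_{Ψ^{n-1}(Ω̂)}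 u^{n-1} dx, where u^k : Ψ^k(Ω̂) → ℝ is the function determined by u^k ∘ Ψ^k = û^k on Ω̂ for k ∈ {n-1, n}. -/
/-!
Testing the Galerkin equation with the constant function `1 ∈ U` kills the advection and
diffusion terms, since `∇1 = 0`, and leaves `∫_Ω̂ det DΨⁿ ûⁿ = ∫_Ω̂ det DΨⁿ⁻¹ ûⁿ⁻¹`. Because the
Jacobians are positive, the change of variables formula identifies both sides with the
physical masses on `Ψⁿ(Ω̂)` and `Ψⁿ⁻¹(Ω̂)`.
-/

open MeasureTheory RealInnerProductSpace

theorem setIntegral_image_eq_setIntegral_det_smul_of_comp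
    {E F : Type*} [NormedAddCommGroup E] [NormedSpace ℝ E] [FiniteDimensional ℝ E]
    [MeasurableSpace E] [BorelSpace E] [NormedAddCommGroup F] [NormedSpace ℝ F]
    (μ : Measure E) [μ.IsAddHaarMeasure] {s : Set E} {f : E → E} {f' : E → E →L[ℝ] E}
    (hs : MeasurableSet s) (hf' : ∀ x ∈ s, HasFDerivWithinAt f (f' x) s x) (hf : s.InjOn f)
    (hdet : ∀ x ∈ s, 0 ≤ (f' x).det) {g : E → F} {ĝ : E → F} (hg : ∀ x ∈ s, g (f x) = ĝ x) :
    ∫ x in f '' s, g x ∂μ = ∫ x in s, (f' x).det • ĝ x ∂μ := by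
  rw [integral_image_eq_integral_abs_det_fderiv_smul μ hs hf' hf]
  refine setIntegral_congr_fun hs fun x hx => ?_
  rw [abs_of_nonneg (hdet x hx), hg x hx]

theorem rom_mass_conservation_general
    (d : ℕ)
    (Ω : Set (EuclideanSpace ℝ (Fin d))) (hΩ : MeasurableSet Ω)
    (Δt α : ℝ)
    (Ψm Ψn : EuclideanSpace ℝ (Fin d) → EuclideanSpace ℝ (Fin d))
    (hΨmInj : Set.InjOn Ψm Ω) (hΨnInj : Set.InjOn Ψn Ω)
    (hΨmDiff : Differentiable ℝ Ψm) (hΨnDiff : Differentiable ℝ Ψn)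
    (hJm : ∀ x ∈ Ω, 0 < LinearMap.det
      ((fderiv ℝ Ψm x : EuclideanSpace ℝ (Fin d) →L[ℝ] EuclideanSpace ℝ (Fin d))
        : EuclideanSpace ℝ (Fin d) →ₗ[ℝ] EuclideanSpace ℝ (Fin d)))
    (hJn : ∀ x ∈ Ω, 0 < LinearMap.det
      ((fderiv ℝ Ψn x : EuclideanSpace ℝ (Fin d) →L[ℝ] EuclideanSpace ℝ (Fin d))
        : EuclideanSpace ℝ (Fin d) →ₗ[ℝ] EuclideanSpace ℝ (Fin d)))
    (U : Set (EuclideanSpace ℝ (Fin d) → ℝ))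
    (hU1 : (fun _ => (1 : ℝ)) ∈ U)
    (hatum hatun : EuclideanSpace ℝ (Fin d) → ℝ)
    (q : EuclideanSpace ℝ (Fin d) → EuclideanSpace ℝ (Fin d))
    (hupdate : ∀ v ∈ U,
      (∫ x in Ω,
        LinearMap.det ((fderiv ℝ Ψn x) : EuclideanSpace ℝ (Fin d) →ₗ[ℝ] EuclideanSpace ℝ (Fin d))
          * hatun x * v x)
      + Δt * ∫ x in Ω,
          LinearMap.det ((fderiv ℝ Ψn x) : EuclideanSpace ℝ (Fin d) →ₗ[ℝ] EuclideanSpace ℝ (Fin d))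
            * hatun x * ⟪q x, (ContinuousLinearMap.adjoint (fderiv ℝ Ψn x)).inverse (gradient v x)⟫
      + α * Δt * ∫ x in Ω,
          LinearMap.det ((fderiv ℝ Ψn x) : EuclideanSpace ℝ (Fin d) →ₗ[ℝ] EuclideanSpace ℝ (Fin d))
            * ⟪(ContinuousLinearMap.adjoint (fderiv ℝ Ψn x)).inverse (gradient hatun x),
               (ContinuousLinearMap.adjoint (fderiv ℝ Ψn x)).inverse (gradient v x)⟫
      = ∫ x in Ω,
          LinearMap.det ((fderiv ℝ Ψm x) : EuclideanSpace ℝ (Fin d) →ₗ[ℝ] EuclideanSpace ℝ (Fin d))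
            * hatum x * v x)
    (um un : EuclideanSpace ℝ (Fin d) → ℝ)
    (hum : ∀ x ∈ Ω, um (Ψm x) = hatum x)
    (hun : ∀ x ∈ Ω, un (Ψn x) = hatun x) :
    ∫ x in Ψn '' Ω, un x = ∫ x in Ψm '' Ω, um x := by
  have mass_eq := hupdate _ hU1
  simp only [gradient_fun_const, map_zero, inner_zero_right, mul_zero, mul_one,
    integral_zero, add_zero] at mass_eq
  rw [setIntegral_image_eq_setIntegral_det_smul_of_comp volume hΩ
      (fun x _ => (hΨnDiff x).hasFDerivAt.hasFDerivWithinAt) hΨnInj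
      (fun x hx => (hJn x hx).le) hun,
    setIntegral_image_eq_setIntegral_det_smul_of_comp volume hΩ
      (fun x _ => (hΨmDiff x).hasFDerivAt.hasFDerivWithinAt) hΨmInj
      (fun x hx => (hJm x hx).le) hum]
  simpa only [smul_eq_mul] using mass_eq

/-- Mass conservation of the Galerkin reduced order model for the ALE discretization:
if the reduced concentration space contains the constant functions, then the Galerkin
projection exactly conserves the total solute mass on the deformed domains. -/
theorem rom_mass_conservation
    (d : ℕ) (hd : 1 ≤ d)
    (Ω : Set (EuclideanSpace ℝ (Fin d))) (hΩ : MeasurableSet Ω)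
    (Δt α : ℝ) (hΔt : 0 < Δt) (hα : 0 < α)
    (Ψm Ψn : EuclideanSpace ℝ (Fin d) → EuclideanSpace ℝ (Fin d))
    (hΨmInj : Set.InjOn Ψm Ω) (hΨnInj : Set.InjOn Ψn Ω)
    (hΨmDiff : Differentiable ℝ Ψm) (hΨnDiff : Differentiable ℝ Ψn)
    (hJm : ∀ x ∈ Ω, 0 < LinearMap.det
      ((fderiv ℝ Ψm x : EuclideanSpace ℝ (Fin d) →L[ℝ] EuclideanSpace ℝ (Fin d))
        : EuclideanSpace ℝ (Fin d) →ₗ[ℝ] EuclideanSpace ℝ (Fin d)))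
    (hJn : ∀ x ∈ Ω, 0 < LinearMap.det
      ((fderiv ℝ Ψn x : EuclideanSpace ℝ (Fin d) →L[ℝ] EuclideanSpace ℝ (Fin d))
        : EuclideanSpace ℝ (Fin d) →ₗ[ℝ] EuclideanSpace ℝ (Fin d)))
    (U : Set (EuclideanSpace ℝ (Fin d) → ℝ))
    (hUdiff : ∀ v ∈ U, Differentiable ℝ v)
    (hU1 : (fun _ => (1 : ℝ)) ∈ U)
    (hatum hatun : EuclideanSpace ℝ (Fin d) → ℝ)
    (hm : hatum ∈ U) (hn : hatun ∈ U)
    (q : EuclideanSpace ℝ (Fin d) → EuclideanSpace ℝ (Fin d)) (hq : Measurable q)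
    (hint1 : ∀ v ∈ U, IntegrableOn (fun x =>
      LinearMap.det ((fderiv ℝ Ψn x) : EuclideanSpace ℝ (Fin d) →ₗ[ℝ] EuclideanSpace ℝ (Fin d))
        * hatun x * v x) Ω)
    (hint2 : ∀ v ∈ U, IntegrableOn (fun x =>
      LinearMap.det ((fderiv ℝ Ψn x) : EuclideanSpace ℝ (Fin d) →ₗ[ℝ] EuclideanSpace ℝ (Fin d))
        * hatun x * ⟪q x, (ContinuousLinearMap.adjoint (fderiv ℝ Ψn x)).inverse (gradient v x)⟫) Ω)
    (hint3 : ∀ v ∈ U, IntegrableOn (fun x =>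
      LinearMap.det ((fderiv ℝ Ψn x) : EuclideanSpace ℝ (Fin d) →ₗ[ℝ] EuclideanSpace ℝ (Fin d))
        * ⟪(ContinuousLinearMap.adjoint (fderiv ℝ Ψn x)).inverse (gradient hatun x),
           (ContinuousLinearMap.adjoint (fderiv ℝ Ψn x)).inverse (gradient v x)⟫) Ω)
    (hint4 : ∀ v ∈ U, IntegrableOn (fun x =>
      LinearMap.det ((fderiv ℝ Ψm x) : EuclideanSpace ℝ (Fin d) →ₗ[ℝ] EuclideanSpace ℝ (Fin d))
        * hatum x * v x) Ω)
    (hupdate : ∀ v ∈ U,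
      (∫ x in Ω,
        LinearMap.det ((fderiv ℝ Ψn x) : EuclideanSpace ℝ (Fin d) →ₗ[ℝ] EuclideanSpace ℝ (Fin d))
          * hatun x * v x)
      + Δt * ∫ x in Ω,
          LinearMap.det ((fderiv ℝ Ψn x) : EuclideanSpace ℝ (Fin d) →ₗ[ℝ] EuclideanSpace ℝ (Fin d))
            * hatun x * ⟪q x, (ContinuousLinearMap.adjoint (fderiv ℝ Ψn x)).inverse (gradient v x)⟫
      + α * Δt * ∫ x in Ω,
          LinearMap.det ((fderiv ℝ Ψn x) : EuclideanSpace ℝ (Fin d) →ₗ[ℝ] EuclideanSpace ℝ (Fin d))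
            * ⟪(ContinuousLinearMap.adjoint (fderiv ℝ Ψn x)).inverse (gradient hatun x),
               (ContinuousLinearMap.adjoint (fderiv ℝ Ψn x)).inverse (gradient v x)⟫
      = ∫ x in Ω,
          LinearMap.det ((fderiv ℝ Ψm x) : EuclideanSpace ℝ (Fin d) →ₗ[ℝ] EuclideanSpace ℝ (Fin d))
            * hatum x * v x)
    (um un : EuclideanSpace ℝ (Fin d) → ℝ)
    (hum : ∀ x ∈ Ω, um (Ψm x) = hatum x)
    (hun : ∀ x ∈ Ω, un (Ψn x) = hatun x) :
    ∫ x in Ψn '' Ω, un x = ∫ x in Ψm '' Ω, um x :=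
  rom_mass_conservation_general d Ω hΩ Δt α Ψm Ψn hΨmInj hΨnInj hΨmDiff hΨnDiff hJm hJn U hU1 hatum
    hatun q hupdate um un hum hun
end
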